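/- arXiv:1103.5848 — 2 statements merged into one kernel-verified Lean document; each statement's English description precedes it below -/
import Mathlib

section
/- The monic Laguerre polynomials L_n (with parameter b > 0) are orthogonal with respect to the gamma distribution: for m ≠ n, ∫_0^∞ L_m(x) L_n(x) γ_b(dx) = 0. -/
/-!
The moments of the gamma distribution are Pochhammer symbols:
`∫ x^k γ_b(dx) = Γ(b+k)/Γ(b) = (b)_k`. Splitting `(b)_(i+k) = (b)_k (b+k)_i`, the moment
`∫ x^i L_n γ_b(dx)` becomes `(b)_n ∑_k (-1)^(n-k) C(n,k) (b+k)_i`, the `n`-th forward difference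
at `b` of the degree-`i` polynomial `(X)_i`, which vanishes for `i < n`. Since `L_m` has degree
`m < n`, `∫ L_m L_n γ_b(dx)` is a combination of such moments.
-/

/-- The monic Laguerre polynomial with parameter `b`, as a function of `x`. -/
noncomputable def laguerre (b : ℝ) (n : ℕ) (x : ℝ) : ℝ :=
  (ascPochhammer ℝ n).eval b *
    ∑ m ∈ Finset.range (n + 1),
      (-1 : ℝ) ^ (n - m) * (Nat.descFactorial n m : ℝ) /
        ((ascPochhammer ℝ m).eval b * (Nat.factorial m : ℝ)) * x ^ m

open MeasureTheory Real Set Finset Polynomial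

noncomputable def gammaDensity (b x : ℝ) : ℝ :=
  x ^ (b - 1) * exp (-x) / Gamma b

noncomputable def laguerreCoeff (b : ℝ) (n k : ℕ) : ℝ :=
  (ascPochhammer ℝ n).eval b * (-1) ^ (n - k) * n.choose k / (ascPochhammer ℝ k).eval b

theorem ascPochhammer_add_eval {S : Type*} [CommSemiring S] (b : S) (k i : ℕ) :
    (ascPochhammer S (k + i)).eval b =
      (ascPochhammer S k).eval b * (ascPochhammer S i).eval (b + k) := by
  rw [← ascPochhammer_mul, eval_mul, eval_comp]
  simp

theorem laguerre_eq_sum (b : ℝ) (n : ℕ) (x : ℝ) :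
    laguerre b n x = ∑ k ∈ range (n + 1), laguerreCoeff b n k * x ^ k := by
  rw [laguerre, mul_sum]
  refine sum_congr rfl fun k _ ↦ ?_
  rw [laguerreCoeff, Nat.descFactorial_eq_factorial_mul_choose, Nat.cast_mul]
  field_simp

theorem pow_mul_laguerre_eq_sum (b : ℝ) (i n : ℕ) (x : ℝ) :
    x ^ i * laguerre b n x = ∑ k ∈ range (n + 1), laguerreCoeff b n k * x ^ (i + k) := by
  rw [laguerre_eq_sum, mul_sum]
  exact sum_congr rfl fun k _ ↦ by ring

section

variable {b : ℝ}

theorem Real.Gamma_add_nat_eq_ascPochhammer_mul (hb : 0 < b) (k : ℕ) :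
    Gamma (b + k) = (ascPochhammer ℝ k).eval b * Gamma b := by
  induction k with
  | zero => simp
  | succ k ih =>
    rw [Nat.cast_succ, ← add_assoc, Gamma_add_one (by positivity), ih, ascPochhammer_succ_eval]
    ring

theorem pow_mul_gammaDensity_eqOn (k : ℕ) :
    EqOn (fun x ↦ x ^ k * gammaDensity b x)
      (fun x ↦ exp (-x) * x ^ (b + k - 1) / Gamma b) (Ioi 0) := by
  intro x (hx : 0 < x)
  simp only [gammaDensity]
  rw [add_sub_right_comm, rpow_add hx, rpow_natCast]
  ring

theorem integrableOn_pow_mul_gammaDensity (hb : 0 < b) (k : ℕ) :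
    IntegrableOn (fun x ↦ x ^ k * gammaDensity b x) (Ioi 0) :=
  IntegrableOn.congr_fun ((GammaIntegral_convergent (by positivity : 0 < b + k)).div_const _)
    (pow_mul_gammaDensity_eqOn k).symm measurableSet_Ioi

theorem integral_pow_mul_gammaDensity (hb : 0 < b) (k : ℕ) :
    ∫ x in Ioi 0, x ^ k * gammaDensity b x = (ascPochhammer ℝ k).eval b := by
  rw [setIntegral_congr_fun measurableSet_Ioi (pow_mul_gammaDensity_eqOn k), integral_div,
    ← Gamma_eq_integral (by positivity), Gamma_add_nat_eq_ascPochhammer_mul hb,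
    mul_div_cancel_right₀ _ (Gamma_pos_of_pos hb).ne']

theorem integrableOn_sum_mul_pow_mul_gammaDensity (hb : 0 < b) {ι : Type*} (s : Finset ι)
    (c : ι → ℝ) (e : ι → ℕ) :
    IntegrableOn (fun x ↦ (∑ i ∈ s, c i * x ^ e i) * gammaDensity b x) (Ioi 0) := by
  simp_rw [sum_mul, mul_assoc]
  exact integrable_finsetSum _ fun i _ ↦ (integrableOn_pow_mul_gammaDensity hb (e i)).const_mul _

theorem integral_sum_mul_pow_mul_gammaDensity (hb : 0 < b) {ι : Type*} (s : Finset ι)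
    (c : ι → ℝ) (e : ι → ℕ) :
    ∫ x in Ioi 0, (∑ i ∈ s, c i * x ^ e i) * gammaDensity b x =
      ∑ i ∈ s, c i * (ascPochhammer ℝ (e i)).eval b := by
  simp_rw [sum_mul, mul_assoc]
  rw [integral_finsetSum _ fun i _ ↦ (integrableOn_pow_mul_gammaDensity hb (e i)).const_mul _]
  simp_rw [integral_const_mul, integral_pow_mul_gammaDensity hb]

theorem sum_laguerreCoeff_mul_ascPochhammer_eq_zero (hb : 0 < b) {i n : ℕ} (hin : i < n) :
    ∑ k ∈ range (n + 1), laguerreCoeff b n k * (ascPochhammer ℝ (i + k)).eval b = 0 := by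
  have hdiff := fwdDiff_iter_eq_sum_shift (1 : ℝ) (ascPochhammer ℝ i).eval n b
  rw [fwdDiff_iter_eq_zero_of_degree_lt (by rwa [ascPochhammer_natDegree])] at hdiff
  calc ∑ k ∈ range (n + 1), laguerreCoeff b n k * (ascPochhammer ℝ (i + k)).eval b
      = (ascPochhammer ℝ n).eval b * ∑ k ∈ range (n + 1),
          ((-1 : ℤ) ^ (n - k) * n.choose k) • (ascPochhammer ℝ i).eval (b + k • 1) := by
        rw [mul_sum]
        refine sum_congr rfl fun k _ ↦ ?_
        rw [add_comm i, ascPochhammer_add_eval, laguerreCoeff]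
        have := (ascPochhammer_pos k b hb).ne'
        simp only [nsmul_one, zsmul_eq_mul]
        push_cast
        field_simp
    _ = 0 := by rw [← hdiff, Pi.zero_apply, mul_zero]

theorem integrableOn_pow_mul_laguerre_mul_gammaDensity (hb : 0 < b) (i n : ℕ) :
    IntegrableOn (fun x ↦ x ^ i * laguerre b n x * gammaDensity b x) (Ioi 0) := by
  simpa only [pow_mul_laguerre_eq_sum] using
    integrableOn_sum_mul_pow_mul_gammaDensity hb (range (n + 1)) (laguerreCoeff b n) (i + ·)

theorem integral_pow_mul_laguerre_mul_gammaDensity (hb : 0 < b) {i n : ℕ} (hin : i < n) :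
    ∫ x in Ioi 0, x ^ i * laguerre b n x * gammaDensity b x = 0 := by
  simp_rw [pow_mul_laguerre_eq_sum]
  rw [integral_sum_mul_pow_mul_gammaDensity hb]
  exact sum_laguerreCoeff_mul_ascPochhammer_eq_zero hb hin

end

/-- Orthogonality of the monic Laguerre polynomials with respect to the gamma
distribution `γ_b(dx) = x^(b-1) e^(-x)/Γ(b) dx` on `(0,∞)`: for `m ≠ n` the
integral of `L_m L_n` vanishes. -/
theorem laguerre_orthogonal (b : ℝ) (hb : 0 < b) (m n : ℕ) (hmn : m ≠ n) :
    ∫ x in Set.Ioi (0 : ℝ),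
        laguerre b m x * laguerre b n x * (x ^ (b - 1) * Real.exp (-x) / Real.Gamma b) = 0 := by
  wlog hlt : m < n generalizing m n
  · simpa only [mul_comm (laguerre b m _)] using this n m hmn.symm (by omega)
  change ∫ x in Ioi 0, laguerre b m x * laguerre b n x * gammaDensity b x = 0
  have hexpand : ∀ x, laguerre b m x * laguerre b n x * gammaDensity b x = ∑ i ∈ range (m + 1),
      laguerreCoeff b m i * (x ^ i * laguerre b n x * gammaDensity b x) := by
    intro x
    rw [laguerre_eq_sum b m, sum_mul, sum_mul]
    exact sum_congr rfl fun i _ ↦ by ring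
  simp_rw [hexpand]
  rw [integral_finsetSum _ fun i _ ↦
    (integrableOn_pow_mul_laguerre_mul_gammaDensity hb i n).const_mul _]
  refine sum_eq_zero fun i hi ↦ ?_
  rw [integral_const_mul, integral_pow_mul_laguerre_mul_gammaDensity hb
    (by rw [Finset.mem_range] at hi; omega), mul_zero]
end

section
/- The Charlier symmetric function relation: define the Charlier operator on symmetric functions (identified as functions on partitions via Frobenius–Schur functions FS_ν) by 𝔇^Ch FS_ν = -|ν| FS_ν + θ Σ_{□∈ν⁻} FS_{ν∖□}, and the Charlier symmetric function 𝔠_ν = Σ_{μ⊆ν} (-θ)^{|ν|-|μ|} (dim ν/μ)/(|ν|-|μ|)! · FS_μ. Then 𝔇^Ch 𝔠_ν = -|ν| 𝔠_ν for every partition ν. -/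
open scoped Classical

/-- A finite set of boxes `(row, column)` (0-indexed) is a Young diagram if it is a
lower set in the coordinatewise order. -/
def IsYD (s : Finset (ℕ × ℕ)) : Prop :=
  ∀ p ∈ s, ∀ q : ℕ × ℕ, q.1 ≤ p.1 → q.2 ≤ p.2 → q ∈ s

/-- Young diagrams (= partitions). -/
def YD : Type := {s : Finset (ℕ × ℕ) // IsYD s}

/-- `skewDim n μ ν` counts the chains of diagrams from `ν` down to `μ` removing one
corner box at a time in `n` steps; for `n = |ν| - |μ|` this is the number `dim ν/μ`
of standard Young tableaux of skew shape `ν/μ`. -/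
noncomputable def skewDim : ℕ → Finset (ℕ × ℕ) → Finset (ℕ × ℕ) → ℕ
  | 0, μ, ν => if μ = ν then 1 else 0
  | n + 1, μ, ν =>
      ∑ p ∈ ν.filter (fun p => IsYD (ν.erase p) ∧ μ ⊆ ν.erase p),
        skewDim n μ (ν.erase p)

/-- `dim ν`, the number of standard Young tableaux of shape `ν`. -/
noncomputable def dimYD (s : Finset (ℕ × ℕ)) : ℕ := skewDim s.card ∅ s

/-- The Charlier operator `𝔇^Ch`, defined on the Frobenius–Schur basis
(`FS_ν` encoded as `Finsupp.single ν 1`) by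
`𝔇^Ch FS_ν = -|ν| FS_ν + θ ∑_{□ ∈ ν⁻} FS_{ν∖□}`. -/
noncomputable def charlierOp (θ : ℂ) (F : YD →₀ ℂ) : YD →₀ ℂ :=
  F.sum fun ν a =>
    a • ((-(ν.1.card : ℂ)) • Finsupp.single ν (1 : ℂ) +
      θ • ∑ p ∈ (ν.1.filter (fun p => IsYD (ν.1.erase p))).attach,
        (Finsupp.single (⟨ν.1.erase p.1, (Finset.mem_filter.mp p.2).2⟩ : YD) (1 : ℂ) :
          YD →₀ ℂ))

/-- The Charlier symmetric function
`𝔠_ν = ∑_{μ ⊆ ν} (-θ)^{|ν|-|μ|} (dim ν/μ)/(|ν|-|μ|)! FS_μ`. -/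
noncomputable def charlierSF (θ : ℂ) (ν : YD) : YD →₀ ℂ :=
  ∑ s ∈ (ν.1.powerset.filter IsYD).attach,
    ((-θ) ^ (ν.1.card - s.1.card) *
        (skewDim (ν.1.card - s.1.card) s.1 ν.1 : ℂ) /
          (Nat.factorial (ν.1.card - s.1.card) : ℂ)) •
      Finsupp.single (⟨s.1, (Finset.mem_filter.mp s.2).2⟩ : YD) (1 : ℂ)

/-! In the basis `FS_s`, the lowering part of `𝔇^Ch` moves a coefficient from `FS_{L ∪ {q}}`
to `FS_L`, so the coefficient of `FS_L` in `𝔇^Ch 𝔠_ν` is `-|L| c_L + θ ∑_q c_{L ∪ {q}}`, the sum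
running over the boxes `q ∈ ν \ L`. With `c_s = (-θ)^d dim(ν/s) / d!` for `d = |ν| - |s|`, the
branching rule `dim(ν/L) = ∑_q dim(ν/(L ∪ {q}))` turns `θ ∑_q c_{L ∪ {q}}` into
`-(|ν| - |L|) c_L`, and the coefficient becomes `-|ν| c_L`. -/

theorem Finset.sum_powerset_sum_erase {α M : Type*} [DecidableEq α] [AddCommMonoid M]
    (ν : Finset α) (f : Finset α → Finset α → M) :
    ∑ s ∈ ν.powerset, ∑ p ∈ s, f s (s.erase p) =
      ∑ t ∈ ν.powerset, ∑ q ∈ ν \ t, f (insert q t) t := by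
  rw [Finset.sum_sigma', Finset.sum_sigma']
  refine Finset.sum_nbij' (fun x => ⟨x.1.erase x.2, x.2⟩) (fun y => ⟨insert y.2 y.1, y.2⟩)
    ?_ ?_ ?_ ?_ ?_
  · rintro ⟨s, p⟩ h
    simp only [Finset.mem_sigma, Finset.mem_powerset, Finset.mem_sdiff] at h ⊢
    exact ⟨(Finset.erase_subset p s).trans h.1, h.1 h.2, Finset.notMem_erase p s⟩
  · rintro ⟨t, q⟩ h
    simp only [Finset.mem_sigma, Finset.mem_powerset, Finset.mem_sdiff] at h ⊢
    exact ⟨Finset.insert_subset h.2.1 h.1, Finset.mem_insert_self q t⟩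
  · rintro ⟨s, p⟩ h
    simp only [Finset.mem_sigma] at h
    simp [Finset.insert_erase h.2]
  · rintro ⟨t, q⟩ h
    simp only [Finset.mem_sigma, Finset.mem_sdiff] at h
    simp [Finset.erase_insert h.2.2]
  · rintro ⟨s, p⟩ h
    simp only [Finset.mem_sigma] at h
    simp [Finset.insert_erase h.2]

lemma skewDim_eq_zero_of_not_isYD (m : ℕ) {μ ν : Finset (ℕ × ℕ)} (hν : IsYD ν) (hμ : ¬ IsYD μ) :
    skewDim m μ ν = 0 := by
  induction m generalizing ν with
  | zero => exact if_neg fun h : μ = ν => hμ (h ▸ hν)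
  | succ m ih => exact Finset.sum_eq_zero fun p hp => ih (Finset.mem_filter.mp hp).2.1

-- The chains are counted by the first box added to `μ` instead of the last box removed from `ν`.
lemma skewDim_succ_eq_sum_insert (m : ℕ) {μ : Finset (ℕ × ℕ)} (hμ : IsYD μ) (ν : Finset (ℕ × ℕ)) :
    skewDim (m + 1) μ ν = ∑ q ∈ ν \ μ, skewDim m (insert q μ) ν := by
  induction m generalizing ν with
  | zero =>
    simp only [skewDim, Finset.sum_boole, Nat.cast_id]
    congr 1
    ext p
    simp only [Finset.mem_filter, Finset.mem_sdiff]
    constructor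
    · rintro ⟨⟨hp, -, -⟩, rfl⟩
      exact ⟨⟨hp, Finset.notMem_erase p ν⟩, Finset.insert_erase hp⟩
    · rintro ⟨⟨hp, hpμ⟩, rfl⟩
      rw [Finset.erase_insert hpμ]
      exact ⟨⟨Finset.mem_insert_self p μ, hμ, subset_rfl⟩, rfl⟩
  | succ m ih =>
    rw [skewDim, Finset.sum_congr rfl fun p _ => ih (ν.erase p)]
    simp only [skewDim]
    refine Finset.sum_comm' fun p q => ?_
    simp only [Finset.mem_filter, Finset.mem_sdiff, Finset.mem_erase, Finset.insert_subset_iff]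
    tauto

-- `FS_s`, extended by `0` to sets of boxes that are not diagrams, so that sums may run over
-- all subsets.
noncomputable def frobeniusSchur (s : Finset (ℕ × ℕ)) : YD →₀ ℂ :=
  if h : IsYD s then Finsupp.single (⟨s, h⟩ : YD) 1 else 0

lemma frobeniusSchur_of_not_isYD {s : Finset (ℕ × ℕ)} (hs : ¬ IsYD s) : frobeniusSchur s = 0 :=
  dif_neg hs

lemma frobeniusSchur_val (ν : YD) : frobeniusSchur ν.1 = Finsupp.single ν 1 :=
  dif_pos ν.2

lemma charlierOp_eq_linearCombination (θ : ℂ) :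
    charlierOp θ = Finsupp.linearCombination ℂ fun ν => charlierOp θ (Finsupp.single ν 1) := by
  ext F : 1
  rw [Finsupp.linearCombination_apply]
  exact Finsupp.sum_congr fun ν _ => by
    rw [charlierOp, Finsupp.sum_single_index (by simp), one_smul]

lemma charlierOp_frobeniusSchur (θ : ℂ) (ν : YD) :
    charlierOp θ (frobeniusSchur ν.1) =
      (-(ν.1.card : ℂ)) • frobeniusSchur ν.1 + θ • ∑ p ∈ ν.1, frobeniusSchur (ν.1.erase p) := by
  have hsum : ∑ p ∈ ν.1, frobeniusSchur (ν.1.erase p) =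
      ∑ p ∈ (ν.1.filter fun p => IsYD (ν.1.erase p)).attach,
        Finsupp.single (⟨ν.1.erase p.1, (Finset.mem_filter.mp p.2).2⟩ : YD) (1 : ℂ) := by
    rw [← Finset.sum_filter_of_ne fun p _ h =>
      by_contra fun hp => h (frobeniusSchur_of_not_isYD hp), ← Finset.sum_attach]
    exact Finset.sum_congr rfl fun p _ => dif_pos (Finset.mem_filter.mp p.2).2
  rw [hsum, frobeniusSchur_val, charlierOp, Finsupp.sum_single_index (by simp), one_smul]
  rfl

lemma charlierOp_sum_smul_frobeniusSchur (θ : ℂ) (S : Finset (Finset (ℕ × ℕ)))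
    (c : Finset (ℕ × ℕ) → ℂ) (hc : ∀ s ∈ S, ¬ IsYD s → c s = 0) :
    charlierOp θ (∑ s ∈ S, c s • frobeniusSchur s) =
      ∑ s ∈ S, c s • ((-(s.card : ℂ)) • frobeniusSchur s +
        θ • ∑ p ∈ s, frobeniusSchur (s.erase p)) := by
  rw [charlierOp_eq_linearCombination, map_sum]
  refine Finset.sum_congr rfl fun s hs => ?_
  rw [map_smul, ← charlierOp_eq_linearCombination]
  by_cases hYD : IsYD s
  · rw [charlierOp_frobeniusSchur θ ⟨s, hYD⟩]
  · simp [hc s hs hYD]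

noncomputable def charlierCoeff (θ : ℂ) (ν s : Finset (ℕ × ℕ)) : ℂ :=
  (-θ) ^ (ν.card - s.card) * (skewDim (ν.card - s.card) s ν : ℂ) /
    (Nat.factorial (ν.card - s.card) : ℂ)

lemma charlierCoeff_eq_zero_of_not_isYD (θ : ℂ) {ν s : Finset (ℕ × ℕ)} (hν : IsYD ν)
    (hs : ¬ IsYD s) : charlierCoeff θ ν s = 0 := by
  rw [charlierCoeff, skewDim_eq_zero_of_not_isYD _ hν hs, Nat.cast_zero, mul_zero, zero_div]

lemma charlierSF_eq_sum (θ : ℂ) (ν : YD) :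
    charlierSF θ ν = ∑ s ∈ ν.1.powerset, charlierCoeff θ ν.1 s • frobeniusSchur s := by
  rw [charlierSF, ← Finset.sum_filter_of_ne (p := IsYD) fun s _ h => by_contra fun hs =>
    h (by rw [frobeniusSchur_of_not_isYD hs, smul_zero]), ← Finset.sum_attach]
  exact Finset.sum_congr rfl fun s _ => by
    rw [frobeniusSchur, dif_pos (Finset.mem_filter.mp s.2).2]; rfl

lemma mul_sum_charlierCoeff_insert (θ : ℂ) {ν L : Finset (ℕ × ℕ)} (hL : IsYD L) (hLν : L ⊆ ν) :
    θ * ∑ q ∈ ν \ L, charlierCoeff θ ν (insert q L) =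
      -((ν.card : ℂ) - L.card) * charlierCoeff θ ν L := by
  obtain ⟨m, hm⟩ := Nat.exists_eq_add_of_le (Finset.card_le_card hLν)
  cases m with
  | zero =>
    obtain rfl := Finset.eq_of_subset_of_card_le hLν hm.le
    simp
  | succ m =>
    have hterm : ∀ q ∈ ν \ L, charlierCoeff θ ν (insert q L) =
        (-θ) ^ m / m.factorial * skewDim m (insert q L) ν := by
      intro q hq
      have hcard : ν.card - (insert q L).card = m := by
        rw [Finset.card_insert_of_notMem (Finset.mem_sdiff.mp hq).2]; omega
      rw [charlierCoeff, hcard]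
      ring
    have hdiff : ν.card - L.card = m + 1 := by omega
    rw [Finset.sum_congr rfl hterm, ← Finset.mul_sum, ← Nat.cast_sum,
      ← skewDim_succ_eq_sum_insert m hL, charlierCoeff, hdiff, hm, Nat.factorial_succ, pow_succ]
    push_cast
    field_simp
    ring

/-- The Charlier symmetric functions are eigenvectors of the Charlier operator:
`𝔇^Ch 𝔠_ν = -|ν| 𝔠_ν` for every partition `ν`. -/
theorem charlierOp_charlierSF (θ : ℂ) (ν : YD) :
    charlierOp θ (charlierSF θ ν) = (-(ν.1.card : ℂ)) • charlierSF θ ν := by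
  rw [charlierSF_eq_sum, charlierOp_sum_smul_frobeniusSchur θ _ _
    fun s _ hs => charlierCoeff_eq_zero_of_not_isYD θ ν.2 hs, Finset.smul_sum]
  simp only [smul_add, Finset.sum_add_distrib, Finset.smul_sum]
  rw [Finset.sum_powerset_sum_erase ν.1 fun s t => charlierCoeff θ ν.1 s • θ • frobeniusSchur t,
    ← Finset.sum_add_distrib]
  refine Finset.sum_congr rfl fun L hL => ?_
  by_cases hYD : IsYD L
  · have hcoeff := mul_sum_charlierCoeff_insert θ hYD (Finset.mem_powerset.mp hL)
    rw [← Finset.sum_smul, smul_smul, smul_smul, smul_smul, ← add_smul]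
    congr 1
    linear_combination hcoeff
  · simp [frobeniusSchur_of_not_isYD hYD]
end
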